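/- arXiv:1003.0545 — 4 statements merged into one kernel-verified Lean document; each statement's English description precedes it below -/
import Mathlib

section
/- For each fixed integer ℓ > 0, the sequence k·log λ_{(k,ℓ)} converges to log((3+√5)/2) as k → ∞, where λ_{(k,ℓ)} denotes the largest real root of f_{(k,ℓ)}(t) = t^{2k} - t^{k+ℓ} - t^k - t^{k-ℓ} + 1. -/
open Filter Real

private lemma mu_facts : 2 < (3 + Real.sqrt 5) / 2 ∧
    ((3 + Real.sqrt 5) / 2) ^ 2 - 3 * ((3 + Real.sqrt 5) / 2) + 1 = 0 := by
  have h5 : Real.sqrt 5 ^ 2 = 5 := Real.sq_sqrt (by norm_num)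
  have h1 : 1 < Real.sqrt 5 := by nlinarith [Real.sqrt_nonneg 5]
  constructor
  · linarith
  · nlinarith

private lemma cont_g (ℓ k : ℕ) :
    Continuous (fun t : ℝ => t ^ (2 * k) - t ^ (k + ℓ) - t ^ k - t ^ (k - ℓ) + 1) := by
  continuity

set_option maxHeartbeats 1000000 in
/-- Lower bound: for `1 < c` with `c² - 3c + 1 < 0`, eventually `1 < lam k` and `c ≤ lam k ^ k`. -/
private lemma lower_bound (ℓ : ℕ) (hℓ : 0 < ℓ) (lam : ℕ → ℝ)
    (hlam : ∀ k, ℓ < k →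
      IsGreatest {t : ℝ |
        t ^ (2 * k) - t ^ (k + ℓ) - t ^ k - t ^ (k - ℓ) + 1 = 0} (lam k))
    (c : ℝ) (hc1 : 1 < c) (hcneg : c ^ 2 - 3 * c + 1 < 0) :
    ∀ᶠ k in atTop, 1 < lam k ∧ c ≤ lam k ^ k := by
  have hc0 : (0:ℝ) < c := by linarith
  -- F k is the value of g at c^(1/k)
  set F : ℕ → ℝ := fun k =>
    c ^ (2:ℝ) - c ^ (1 + (ℓ:ℝ)/k) - c ^ ((k:ℝ)/k) - c ^ (1 - (ℓ:ℝ)/k) + 1 with hF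
  have hdiv : Tendsto (fun k : ℕ => (ℓ:ℝ)/k) atTop (nhds 0) :=
    tendsto_const_div_atTop_nhds_zero_nat (ℓ:ℝ)
  have hcont : ∀ x : ℝ, ContinuousAt (fun y : ℝ => c ^ y) x := fun x =>
    Real.continuousAt_const_rpow (ne_of_gt hc0)
  have h1 : Tendsto (fun k : ℕ => c ^ (1 + (ℓ:ℝ)/k)) atTop (nhds c) := by
    have : Tendsto (fun k : ℕ => 1 + (ℓ:ℝ)/k) atTop (nhds 1) := by
      simpa using (tendsto_const_nhds (x := (1:ℝ))).add hdiv
    simpa [Real.rpow_one, Function.comp_def] using ((hcont 1).tendsto).comp this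
  have h2 : Tendsto (fun k : ℕ => c ^ (1 - (ℓ:ℝ)/k)) atTop (nhds c) := by
    have : Tendsto (fun k : ℕ => 1 - (ℓ:ℝ)/k) atTop (nhds 1) := by
      simpa using (tendsto_const_nhds (x := (1:ℝ))).sub hdiv
    simpa [Real.rpow_one, Function.comp_def] using ((hcont 1).tendsto).comp this
  have h3 : Tendsto (fun k : ℕ => c ^ ((k:ℝ)/k)) atTop (nhds c) := by
    have hev : ∀ᶠ k : ℕ in atTop, c ^ ((k:ℝ)/k) = c := by
      filter_upwards [eventually_gt_atTop 0] with k hk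
      rw [div_self (by positivity), Real.rpow_one]
    exact Tendsto.congr' (by filter_upwards [hev] with k hk using hk.symm) tendsto_const_nhds
  have hFt : Tendsto F atTop (nhds (c ^ 2 - 3 * c + 1)) := by
    have : Tendsto F atTop (nhds (c ^ (2:ℝ) - c - c - c + 1)) :=
      ((((tendsto_const_nhds).sub h1).sub h3).sub h2).add tendsto_const_nhds
    have h2c : c ^ (2:ℝ) = c ^ 2 := by
      rw [show (2:ℝ) = ((2:ℕ):ℝ) by norm_num, Real.rpow_natCast]
    rw [h2c] at this
    convert this using 2
    ring
  have hFev : ∀ᶠ k in atTop, F k < 0 := hFt.eventually (gt_mem_nhds hcneg)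
  filter_upwards [hFev, eventually_gt_atTop ℓ] with k hFk hk
  have hk0 : (0:ℝ) < k := by exact_mod_cast hℓ.trans hk
  set t0 : ℝ := c ^ ((k:ℝ)⁻¹) with ht0def
  have hpow : ∀ n : ℕ, t0 ^ n = c ^ ((n:ℝ)/k) := by
    intro n
    rw [ht0def, ← Real.rpow_natCast (c ^ ((k:ℝ)⁻¹)) n, ← Real.rpow_mul hc0.le]
    congr 1
    field_simp
  have ht01 : 1 < t0 := by
    rw [ht0def, Real.one_lt_rpow_iff_of_pos hc0]
    exact Or.inl ⟨hc1, by positivity⟩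
  -- value of g at t0 equals F k
  have hgt0 : t0 ^ (2*k) - t0 ^ (k+ℓ) - t0 ^ k - t0 ^ (k-ℓ) + 1 = F k := by
    rw [hpow, hpow, hpow, hpow, hF]
    have hkne : (k:ℝ) ≠ 0 := ne_of_gt hk0
    have e1 : ((2*k : ℕ):ℝ)/k = (2:ℝ) := by push_cast; field_simp
    have e2 : ((k+ℓ : ℕ):ℝ)/k = 1 + (ℓ:ℝ)/k := by push_cast; field_simp
    have e3 : ((k-ℓ : ℕ):ℝ)/k = 1 - (ℓ:ℝ)/k := by
      rw [Nat.cast_sub hk.le]; field_simp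
    rw [e1, e2, e3]
  -- find a root r ≥ t0 via IVT
  set T : ℝ := t0 + 4 with hT
  have hT4 : (4:ℝ) ≤ T := by linarith
  have hT1 : (1:ℝ) ≤ T := by linarith
  have hT0 : (0:ℝ) < T := by linarith
  have hgT : 0 < T ^ (2*k) - T ^ (k+ℓ) - T ^ k - T ^ (k-ℓ) + 1 := by
    have b1 : T ^ (k+ℓ) ≤ T ^ (2*k-1) := pow_le_pow_right₀ hT1 (by omega)
    have b2 : T ^ k ≤ T ^ (2*k-1) := pow_le_pow_right₀ hT1 (by omega)
    have b3 : T ^ (k-ℓ) ≤ T ^ (2*k-1) := pow_le_pow_right₀ hT1 (by omega)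
    have e : T ^ (2*k) = T ^ (2*k-1) * T := by
      rw [← pow_succ]
      congr 1
      omega
    have hp : 0 < T ^ (2*k-1) := pow_pos hT0 _
    nlinarith
  have hmem : (0:ℝ) ∈ Set.Icc (t0 ^ (2*k) - t0 ^ (k+ℓ) - t0 ^ k - t0 ^ (k-ℓ) + 1)
      (T ^ (2*k) - T ^ (k+ℓ) - T ^ k - T ^ (k-ℓ) + 1) := by
    constructor
    · rw [hgt0]; exact hFk.le
    · exact hgT.le
  obtain ⟨r, hrIcc, hr0⟩ := intermediate_value_Icc (by linarith : t0 ≤ T)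
    ((cont_g ℓ k).continuousOn) hmem
  have hrlam : r ≤ lam k := (hlam k hk).2 hr0
  have ht0r : t0 ≤ r := hrIcc.1
  have hlam1 : 1 < lam k := lt_of_lt_of_le ht01 (ht0r.trans hrlam)
  refine ⟨hlam1, ?_⟩
  have : t0 ^ k ≤ lam k ^ k := pow_le_pow_left₀ (by linarith) (ht0r.trans hrlam) k
  have ht0k : t0 ^ k = c := by
    rw [hpow k, div_self (ne_of_gt hk0), Real.rpow_one]
  linarith [this, ht0k ▸ this]

set_option maxHeartbeats 1000000 in
/-- Upper bound: for `2 ≤ c` with `0 < c² - 3c + 1`, eventually `lam k ^ k ≤ c`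
(given `1 < lam k`). -/
private lemma upper_bound (ℓ : ℕ) (hℓ : 0 < ℓ) (lam : ℕ → ℝ)
    (hlam : ∀ k, ℓ < k →
      IsGreatest {t : ℝ |
        t ^ (2 * k) - t ^ (k + ℓ) - t ^ k - t ^ (k - ℓ) + 1 = 0} (lam k))
    (c : ℝ) (hc2 : 2 ≤ c) (hcpos : 0 < c ^ 2 - 3 * c + 1) :
    ∀ᶠ k in atTop, 1 < lam k → lam k ^ k ≤ c := by
  set δ : ℝ := (c ^ 2 - 3 * c + 1) / 32 with hδdef
  have hδ : 0 < δ := div_pos hcpos (by norm_num)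
  have hgrow : Tendsto (fun k : ℕ => (1 + δ) ^ k) atTop atTop :=
    tendsto_pow_atTop_atTop_of_one_lt (by linarith)
  filter_upwards [eventually_gt_atTop ℓ, eventually_ge_atTop (2*ℓ),
    hgrow.eventually_gt_atTop ((16:ℝ) ^ ℓ)] with k hk hk2 hkδ hlam1
  set t := lam k with htdef
  by_contra hcon
  push_neg at hcon
  have hroot : t ^ (2*k) - t ^ (k+ℓ) - t ^ k - t ^ (k-ℓ) + 1 = 0 := (hlam k hk).1
  set x : ℝ := t ^ k with hxdef
  have hx1 : (1:ℝ) < x := one_lt_pow₀ hlam1 (by omega)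
  have hxc : c < x := hcon
  have ht1 : (1:ℝ) < t := hlam1
  have hy1 : (1:ℝ) ≤ t ^ ℓ := one_le_pow₀ ht1.le
  set y : ℝ := t ^ ℓ with hydef
  have hy0 : (0:ℝ) < y := by linarith
  have e1 : t ^ (2*k) = x ^ 2 := by rw [hxdef, ← pow_mul, mul_comm]
  have e2 : t ^ (k+ℓ) = x * y := by rw [hxdef, hydef, ← pow_add]
  have e3 : t ^ (k-ℓ) * y = x := by
    rw [hydef, hxdef, ← pow_add]
    congr 1
    omega
  have e3' : t ^ (k-ℓ) = x / y := by
    field_simp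
    linarith [e3]
  rw [e1, e2, e3'] at hroot
  -- key estimate: x^2 - x*y - x - x/y + 1 > 0, contradiction
  have hxy : x / y ≤ x := by
    rw [div_le_iff₀ hy0]
    nlinarith
  have hkey : 0 < x ^ 2 - x * y - x - x / y + 1 := by
    have hmain : 0 < x ^ 2 - x * y - 2 * x + 1 := by
      rcases le_or_gt 16 x with h16 | h16
      · -- large x : y² ≤ x
        have hysq : y ^ 2 ≤ x := by
          rw [hydef, hxdef, ← pow_mul]
          exact pow_le_pow_right₀ ht1.le (by omega)
        nlinarith [sq_nonneg (4*y - x)]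
      · -- moderate x : y ≤ 1 + δ
        have hyδ : y ≤ 1 + δ := by
          by_contra hyδ
          push_neg at hyδ
          have h1 : (1 + δ) ^ k ≤ y ^ k := pow_le_pow_left₀ (by linarith) hyδ.le k
          have h2 : y ^ k = x ^ ℓ := by
            rw [hydef, hxdef, ← pow_mul, ← pow_mul, mul_comm]
          have h3 : x ^ ℓ < 16 ^ ℓ := by
            apply pow_lt_pow_left₀ h16 (by linarith) (by omega)
          linarith
        have hquad : 32 * δ ≤ x ^ 2 - 3 * x + 1 := by
          rw [hδdef]
          nlinarith
        nlinarith
    nlinarith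
  linarith [hroot, hkey]

set_option maxHeartbeats 1000000 in
/-- For fixed `ℓ > 0`, `k · log λ_{(k,ℓ)} → log((3+√5)/2)` as `k → ∞`, where
`λ_{(k,ℓ)}` is the largest real root of `t^(2k) - t^(k+ℓ) - t^k - t^(k-ℓ) + 1`. -/
theorem stmt10 (ℓ : ℕ) (hℓ : 0 < ℓ) (lam : ℕ → ℝ)
    (hlam : ∀ k, ℓ < k →
      IsGreatest {t : ℝ |
        t ^ (2 * k) - t ^ (k + ℓ) - t ^ k - t ^ (k - ℓ) + 1 = 0} (lam k)) :
    Filter.Tendsto (fun k : ℕ => (k : ℝ) * Real.log (lam k))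
      Filter.atTop (nhds (Real.log ((3 + Real.sqrt 5) / 2))) := by
  obtain ⟨hμ2, hμroot⟩ := mu_facts
  set μ : ℝ := (3 + Real.sqrt 5) / 2 with hμdef
  have hμ0 : (0:ℝ) < μ := by linarith
  set L : ℝ := Real.log μ with hLdef
  have hL : 0 < L := Real.log_pos (by linarith)
  -- lower helper for c < μ
  have hlow : ∀ c : ℝ, 1 < c → c < μ → ∀ᶠ k in atTop, 1 < lam k ∧ c ≤ lam k ^ k := by
    intro c hc1 hcμ
    apply lower_bound ℓ hℓ lam hlam c hc1
    nlinarith [mul_pos (sub_pos.2 hcμ) (show (0:ℝ) < c + μ - 3 by linarith)]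
  have hupp : ∀ c : ℝ, μ < c → ∀ᶠ k in atTop, 1 < lam k → lam k ^ k ≤ c := by
    intro c hcμ
    apply upper_bound ℓ hℓ lam hlam c (by linarith)
    nlinarith [mul_pos (sub_pos.2 hcμ) (show (0:ℝ) < c + μ - 3 by linarith)]
  rw [tendsto_order]
  constructor
  · intro a ha
    set m : ℝ := (max a 0 + L) / 2 with hm
    have hmaxL : max a 0 < L := max_lt ha hL
    have ham : a < m := by
      have := le_max_left a 0
      simp only [hm]
      linarith
    have hmL : m < L := by simp only [hm]; linarith
    have hm0 : 0 < m := by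
      have := le_max_right a 0
      simp only [hm]; linarith
    set c : ℝ := Real.exp m with hc
    have hc1 : 1 < c := by
      rw [hc, ← Real.exp_zero]
      exact Real.exp_lt_exp.2 hm0
    have hcμ : c < μ := by
      rw [hc, ← Real.exp_log hμ0]
      exact Real.exp_lt_exp.2 hmL
    filter_upwards [hlow c hc1 hcμ] with k ⟨hlam1, hck⟩
    have h1 : Real.log c ≤ Real.log (lam k ^ k) := Real.log_le_log (by linarith) hck
    rw [Real.log_pow] at h1
    rw [hc, Real.log_exp] at h1
    linarith
  · intro a ha
    set m : ℝ := (L + a) / 2 with hm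
    have hmL : L < m := by simp only [hm]; linarith
    have hma : m < a := by simp only [hm]; linarith
    set c : ℝ := Real.exp m with hc
    have hcμ : μ < c := by
      rw [hc, ← Real.exp_log hμ0]
      exact Real.exp_lt_exp.2 hmL
    set c₀ : ℝ := Real.exp (L/2) with hc₀
    have hc₀1 : 1 < c₀ := by
      rw [hc₀, ← Real.exp_zero]
      exact Real.exp_lt_exp.2 (by linarith)
    have hc₀μ : c₀ < μ := by
      rw [hc₀, ← Real.exp_log hμ0]
      exact Real.exp_lt_exp.2 (by linarith)
    filter_upwards [hlow c₀ hc₀1 hc₀μ, hupp c hcμ] with k ⟨hlam1, _⟩ hup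
    have hkc := hup hlam1
    have hpos : (0:ℝ) < lam k ^ k := pow_pos (by linarith) k
    have h1 : Real.log (lam k ^ k) ≤ Real.log c := Real.log_le_log hpos hkc
    rw [Real.log_pow] at h1
    rw [hc, Real.log_exp] at h1
    linarith
end

section
/- For integers k, ℓ with 1 < ℓ+1 < k, one has λ_{(k+1,ℓ)} < λ_{(k,ℓ)} < λ_{(k,ℓ+1)}, where λ_{(k,ℓ)} is the largest real root of f_{(k,ℓ)}(t) = t^{2k} - t^{k+ℓ} - t^k - t^{k-ℓ} + 1. -/
open Set

private lemma pw (a : ℝ) (ℓ m i j s n : ℕ) (h : n = i * ℓ + j * m + s) :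
    a ^ n = (a ^ ℓ) ^ i * (a ^ m) ^ j * a ^ s := by
  rw [h, pow_add, pow_add, pow_mul', pow_mul']

private lemma fpos (n p q r : ℕ) (hp : p < n) (hq : q < n) (hr : r < n)
    (t : ℝ) (ht : 4 ≤ t) : 0 < t ^ n - t ^ p - t ^ q - t ^ r + 1 := by
  have h1 : (1:ℝ) ≤ t := by linarith
  have hn : n - 1 + 1 = n := by omega
  have hpow : ∀ s : ℕ, s < n → t ^ s ≤ t ^ (n - 1) :=
    fun s hs => pow_le_pow_right₀ h1 (by omega)
  have h2 : t ^ n = t ^ (n - 1) * t := by rw [← pow_succ, hn]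
  have h3 : (0:ℝ) < t ^ (n - 1) := by positivity
  nlinarith [hpow p hp, hpow q hq, hpow r hr]

private lemma root_gt (n p q r : ℕ) (hp : p < n) (hq : q < n) (hr : r < n)
    (x : ℝ) (hx : x ^ n - x ^ p - x ^ q - x ^ r + 1 < 0) :
    ∃ y, x < y ∧ y ^ n - y ^ p - y ^ q - y ^ r + 1 = 0 := by
  have hc : Continuous fun t : ℝ => t ^ n - t ^ p - t ^ q - t ^ r + 1 := by fun_prop
  have hT : 0 < (max x 4) ^ n - (max x 4) ^ p - (max x 4) ^ q - (max x 4) ^ r + 1 :=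
    fpos n p q r hp hq hr _ (le_max_right x 4)
  obtain ⟨y, hy, hy0⟩ := intermediate_value_Icc (le_max_left x 4) hc.continuousOn
    (Set.mem_Icc.mpr ⟨hx.le, hT.le⟩)
  have hy0' : y ^ n - y ^ p - y ^ q - y ^ r + 1 = 0 := hy0
  refine ⟨y, lt_of_le_of_ne hy.1 ?_, hy0'⟩
  rintro rfl
  linarith

private lemma keyA (ℓ m : ℕ) (a : ℝ) (ha : 1 < a)
    (heq : a ^ (2 * (ℓ + m + 2 + 1)) - a ^ (ℓ + m + 2 + 1 + ℓ) - a ^ (ℓ + m + 2 + 1)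
      - a ^ (m + 3) + 1 = 0) :
    a ^ (2 * (ℓ + m + 2)) - a ^ (ℓ + m + 2 + ℓ) - a ^ (ℓ + m + 2) - a ^ (m + 2) + 1 < 0 := by
  rw [pw a ℓ m 2 2 6 (2 * (ℓ + m + 2 + 1)) (by ring),
      pw a ℓ m 2 1 3 (ℓ + m + 2 + 1 + ℓ) (by ring),
      pw a ℓ m 1 1 3 (ℓ + m + 2 + 1) (by ring),
      pw a ℓ m 0 1 3 (m + 3) (by ring)] at heq
  rw [pw a ℓ m 2 2 4 (2 * (ℓ + m + 2)) (by ring),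
      pw a ℓ m 2 1 2 (ℓ + m + 2 + ℓ) (by ring),
      pw a ℓ m 1 1 2 (ℓ + m + 2) (by ring),
      pw a ℓ m 0 1 2 (m + 2) (by ring)]
  set A := a ^ ℓ with hA
  set B := a ^ m with hB
  have hA1 : (1:ℝ) ≤ A := one_le_pow₀ ha.le
  have hB1 : (1:ℝ) ≤ B := one_le_pow₀ ha.le
  have hApos : (0:ℝ) < A := by linarith
  have hBpos : (0:ℝ) < B := by linarith
  have hapos : (0:ℝ) < a := by linarith
  have ha5 : (1:ℝ) < a ^ 5 := one_lt_pow₀ ha (by norm_num)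
  have hA2 : (1:ℝ) ≤ A ^ 2 := one_le_pow₀ hA1
  have hB2 : (1:ℝ) ≤ B ^ 2 := one_le_pow₀ hB1
  have hAB : (1:ℝ) ≤ A ^ 2 * B ^ 2 := by nlinarith [mul_le_mul hA2 hB2 (by norm_num) (by positivity)]
  have hbig : (1:ℝ) < A ^ 2 * B ^ 2 * a ^ 5 := by nlinarith [pow_pos hapos 5]
  have h5 : A < A ^ 3 * B ^ 2 * a ^ 5 := by nlinarith [mul_lt_mul_of_pos_left hbig hApos]
  have hid : A * a * (A ^ 2 * B ^ 2 * a ^ 4 - A ^ 2 * B ^ 1 * a ^ 2 - A ^ 1 * B ^ 1 * a ^ 2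
        - A ^ 0 * B ^ 1 * a ^ 2 + 1)
      = A * (A ^ 2 * B ^ 2 * a ^ 6 - A ^ 2 * B ^ 1 * a ^ 3 - A ^ 1 * B ^ 1 * a ^ 3
        - A ^ 0 * B ^ 1 * a ^ 3 + 1) + (a - 1) * (A - A ^ 3 * B ^ 2 * a ^ 5) := by ring
  have hmain : A * a * (A ^ 2 * B ^ 2 * a ^ 4 - A ^ 2 * B ^ 1 * a ^ 2 - A ^ 1 * B ^ 1 * a ^ 2
      - A ^ 0 * B ^ 1 * a ^ 2 + 1) < 0 := by
    rw [hid, heq, mul_zero, zero_add]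
    exact mul_neg_of_pos_of_neg (by linarith) (by linarith)
  nlinarith [mul_pos hApos hapos, hmain]

private lemma keyB (ℓ m : ℕ) (b : ℝ) (hb : 1 < b)
    (heq : b ^ (2 * (ℓ + m + 2)) - b ^ (ℓ + m + 2 + ℓ) - b ^ (ℓ + m + 2) - b ^ (m + 2) + 1 = 0) :
    b ^ (2 * (ℓ + m + 2)) - b ^ (ℓ + m + 2 + (ℓ + 1)) - b ^ (ℓ + m + 2) - b ^ (m + 1) + 1 < 0 := by
  rw [pw b ℓ m 2 2 4 (2 * (ℓ + m + 2)) (by ring),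
      pw b ℓ m 2 1 2 (ℓ + m + 2 + ℓ) (by ring),
      pw b ℓ m 1 1 2 (ℓ + m + 2) (by ring),
      pw b ℓ m 0 1 2 (m + 2) (by ring)] at heq
  rw [pw b ℓ m 2 2 4 (2 * (ℓ + m + 2)) (by ring),
      pw b ℓ m 2 1 3 (ℓ + m + 2 + (ℓ + 1)) (by ring),
      pw b ℓ m 1 1 2 (ℓ + m + 2) (by ring),
      pw b ℓ m 0 1 1 (m + 1) (by ring)]
  set A := b ^ ℓ with hA
  set B := b ^ m with hB
  have hA1 : (1:ℝ) ≤ A := one_le_pow₀ hb.le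
  have hB1 : (1:ℝ) ≤ B := one_le_pow₀ hb.le
  have hApos : (0:ℝ) < A := by linarith
  have hBpos : (0:ℝ) < B := by linarith
  have hbpos : (0:ℝ) < b := by linarith
  have hA2 : (1:ℝ) ≤ A ^ 2 := one_le_pow₀ hA1
  have hneg : 1 - A ^ 2 * b < 0 := by nlinarith [mul_le_mul_of_nonneg_right hA2 hbpos.le]
  have hid : A ^ 2 * B ^ 2 * b ^ 4 - A ^ 2 * B ^ 1 * b ^ 3 - A ^ 1 * B ^ 1 * b ^ 2
        - A ^ 0 * B ^ 1 * b ^ 1 + 1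
      = (A ^ 2 * B ^ 2 * b ^ 4 - A ^ 2 * B ^ 1 * b ^ 2 - A ^ 1 * B ^ 1 * b ^ 2
        - A ^ 0 * B ^ 1 * b ^ 2 + 1) + (b - 1) * (B * b) * (1 - A ^ 2 * b) := by ring
  rw [hid, heq, zero_add]
  exact mul_neg_of_pos_of_neg (mul_pos (by linarith) (by positivity)) hneg

/-- For `1 < ℓ+1 < k`, `λ_{(k+1,ℓ)} < λ_{(k,ℓ)} < λ_{(k,ℓ+1)}`. -/
theorem stmt11 (k ℓ : ℕ) (h1 : 1 < ℓ + 1) (h2 : ℓ + 1 < k) (a b c : ℝ)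
    (ha : IsGreatest {t : ℝ |
      t ^ (2 * (k + 1)) - t ^ (k + 1 + ℓ) - t ^ (k + 1) - t ^ (k + 1 - ℓ) + 1 = 0} a)
    (hb : IsGreatest {t : ℝ |
      t ^ (2 * k) - t ^ (k + ℓ) - t ^ k - t ^ (k - ℓ) + 1 = 0} b)
    (hc : IsGreatest {t : ℝ |
      t ^ (2 * k) - t ^ (k + (ℓ + 1)) - t ^ k - t ^ (k - (ℓ + 1)) + 1 = 0} c) :
    a < b ∧ b < c := by
  obtain ⟨m, rfl⟩ : ∃ m, k = ℓ + m + 2 := ⟨k - ℓ - 2, by omega⟩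
  simp only [Set.mem_setOf_eq, upperBounds,
    show ℓ + m + 2 + 1 - ℓ = m + 3 from by omega,
    show ℓ + m + 2 - ℓ = m + 2 from by omega,
    show ℓ + m + 2 - (ℓ + 1) = m + 1 from by omega] at ha hb hc
  have e1 : ℓ + m + 2 + 1 + ℓ < 2 * (ℓ + m + 2 + 1) := by omega
  have e2 : ℓ + m + 2 + 1 < 2 * (ℓ + m + 2 + 1) := by omega
  have e3 : m + 3 < 2 * (ℓ + m + 2 + 1) := by omega
  have f1 : ℓ + m + 2 + ℓ < 2 * (ℓ + m + 2) := by omega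
  have f2 : ℓ + m + 2 < 2 * (ℓ + m + 2) := by omega
  have f3 : m + 2 < 2 * (ℓ + m + 2) := by omega
  have g1 : ℓ + m + 2 + (ℓ + 1) < 2 * (ℓ + m + 2) := by omega
  have g3 : m + 1 < 2 * (ℓ + m + 2) := by omega
  have ha1 : (1:ℝ) < a := by
    obtain ⟨y, hy1, hy0⟩ := root_gt _ _ _ _ e1 e2 e3 1 (by norm_num)
    exact lt_of_lt_of_le hy1 (ha.2 hy0)
  have hb1 : (1:ℝ) < b := by
    obtain ⟨y, hy1, hy0⟩ := root_gt _ _ _ _ f1 f2 f3 1 (by norm_num)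
    exact lt_of_lt_of_le hy1 (hb.2 hy0)
  constructor
  · have hneg := keyA ℓ m a ha1 ha.1
    obtain ⟨y, hy1, hy0⟩ := root_gt _ _ _ _ f1 f2 f3 a hneg
    exact lt_of_lt_of_le hy1 (hb.2 hy0)
  · have hneg := keyB ℓ m b hb1 hb.1
    obtain ⟨y, hy1, hy0⟩ := root_gt _ _ _ _ g1 f2 g3 b hneg
    exact lt_of_lt_of_le hy1 (hc.2 hy0)
end

section
/- The largest real roots of f_{(3,1)}(t) = t^6 - t^4 - t^3 - t^2 + 1 and f_{(4,3)}(t) = t^8 - t^7 - t^4 - t + 1 coincide. -/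
/-- The largest real roots of `f_{(3,1)}` and `f_{(4,3)}` coincide. -/
theorem stmt15 (a b : ℝ)
    (ha : IsGreatest {t : ℝ | t ^ 6 - t ^ 4 - t ^ 3 - t ^ 2 + 1 = 0} a)
    (hb : IsGreatest {t : ℝ | t ^ 8 - t ^ 7 - t ^ 4 - t + 1 = 0} b) :
    a = b := by
  have hset : {t : ℝ | t ^ 6 - t ^ 4 - t ^ 3 - t ^ 2 + 1 = 0}
      = {t : ℝ | t ^ 8 - t ^ 7 - t ^ 4 - t + 1 = 0} := by
    ext t
    have hfac : t ^ 8 - t ^ 7 - t ^ 4 - t + 1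
        = (t ^ 2 - t + 1) * (t ^ 6 - t ^ 4 - t ^ 3 - t ^ 2 + 1) := by ring
    have hpos : t ^ 2 - t + 1 > 0 := by nlinarith [sq_nonneg (t - 1/2)]
    simp only [Set.mem_setOf_eq, hfac]
    constructor
    · intro h; rw [h, mul_zero]
    · intro h
      rcases mul_eq_zero.mp h with h' | h'
      · exact absurd h' (ne_of_gt hpos)
      · exact h'
  rw [hset] at ha
  exact ha.unique hb
end

section
/- The largest real roots of f_{(6,1)}(t) = t^{12} - t^7 - t^6 - t^5 + 1 and f_{(7,4)}(t) = t^{14} - t^{11} - t^7 - t^3 + 1 coincide. -/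
/-- The largest real roots of `f_{(6,1)}` and `f_{(7,4)}` coincide. -/
theorem stmt16 (a b : ℝ)
    (ha : IsGreatest {t : ℝ | t ^ 12 - t ^ 7 - t ^ 6 - t ^ 5 + 1 = 0} a)
    (hb : IsGreatest {t : ℝ | t ^ 14 - t ^ 11 - t ^ 7 - t ^ 3 + 1 = 0} b) :
    a = b := by
  have h1 : {t : ℝ | t ^ 12 - t ^ 7 - t ^ 6 - t ^ 5 + 1 = 0} =
      {t : ℝ | t ^ 10 + t ^ 9 - t ^ 7 - t ^ 6 - t ^ 5 - t ^ 4 - t ^ 3 + t + 1 = 0} := by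
    ext t
    simp only [Set.mem_setOf_eq]
    have hfac : t ^ 12 - t ^ 7 - t ^ 6 - t ^ 5 + 1 =
        (t ^ 2 - t + 1) * (t ^ 10 + t ^ 9 - t ^ 7 - t ^ 6 - t ^ 5 - t ^ 4 - t ^ 3 + t + 1) := by
      ring
    have hpos : t ^ 2 - t + 1 ≠ 0 := by nlinarith [sq_nonneg (t - 1), sq_nonneg t]
    rw [hfac, mul_eq_zero]
    tauto
  have h2 : {t : ℝ | t ^ 14 - t ^ 11 - t ^ 7 - t ^ 3 + 1 = 0} =
      {t : ℝ | t ^ 10 + t ^ 9 - t ^ 7 - t ^ 6 - t ^ 5 - t ^ 4 - t ^ 3 + t + 1 = 0} := by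
    ext t
    simp only [Set.mem_setOf_eq]
    have hfac : t ^ 14 - t ^ 11 - t ^ 7 - t ^ 3 + 1 =
        (t ^ 4 - t ^ 3 + t ^ 2 - t + 1) *
          (t ^ 10 + t ^ 9 - t ^ 7 - t ^ 6 - t ^ 5 - t ^ 4 - t ^ 3 + t + 1) := by
      ring
    have hpos : t ^ 4 - t ^ 3 + t ^ 2 - t + 1 ≠ 0 := by
      nlinarith [sq_nonneg (t ^ 2 - t), sq_nonneg (t - 1), sq_nonneg t, sq_nonneg (t ^ 2 - 1)]
    rw [hfac, mul_eq_zero]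
    tauto
  rw [h1] at ha
  rw [h2] at hb
  exact ha.unique hb
end
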